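/- For every δ ≥ 0 there is a constant Δ ≥ 1, depending only on δ, with the following property: if S ⊆ ℤ is such that S ∪ (−S) generates ℤ, the word metric d_S on ℤ is δ-hyperbolic, and N ∈ ℤ satisfies d_S(0,N) ≥ 10Δ, then for every k ∈ ℤ one has d_S(0, kN) ≥ |k|·(d_S(0,N) − 4Δ). -/
import Mathlib


/-- Word metric on ℤ associated to a subset `S ⊆ ℤ`: the least `k` such that `n − m` is a
sum of `k` elements of `S ∪ (−S)`. -/
noncomputable def wordDistZ (S : Set ℤ) (m n : ℤ) : ℕ :=
  sInf {k : ℕ | ∃ l : List ℤ, l.length = k ∧ (∀ x ∈ l, x ∈ S ∨ -x ∈ S) ∧ n - m = l.sum}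

/-- Gromov product for the word metric on ℤ. -/
noncomputable def gpZ (S : Set ℤ) (x y w : ℤ) : ℝ :=
  ((wordDistZ S x w : ℝ) + (wordDistZ S y w : ℝ) - (wordDistZ S x y : ℝ)) / 2

namespace Stmt6Aux

variable {S : Set ℤ}

lemma wd_le (x : ℤ) (l : List ℤ) (hl : ∀ y ∈ l, y ∈ S ∨ -y ∈ S) (hs : x = l.sum) :
    wordDistZ S 0 x ≤ l.length :=
  Nat.sInf_le ⟨l, rfl, hl, by simpa using hs⟩

lemma wd_zero : wordDistZ S 0 0 = 0 :=
  Nat.le_zero.mp (wd_le 0 [] (by simp) (by simp))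

lemma exists_list (hgen : ∀ n : ℤ, ∃ l : List ℤ, (∀ x ∈ l, x ∈ S ∨ -x ∈ S) ∧ n = l.sum)
    (x : ℤ) :
    ∃ l : List ℤ, l.length = wordDistZ S 0 x ∧ (∀ y ∈ l, y ∈ S ∨ -y ∈ S) ∧ x = l.sum := by
  have hne : {k : ℕ | ∃ l : List ℤ, l.length = k ∧ (∀ y ∈ l, y ∈ S ∨ -y ∈ S) ∧
      x - 0 = l.sum}.Nonempty := by
    obtain ⟨l, hl, hs⟩ := hgen x
    exact ⟨l.length, l, rfl, hl, by simpa using hs⟩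
  obtain ⟨l, h1, h2, h3⟩ := Nat.sInf_mem hne
  exact ⟨l, h1, h2, by simpa using h3⟩

lemma wd_neg_le (hgen : ∀ n : ℤ, ∃ l : List ℤ, (∀ x ∈ l, x ∈ S ∨ -x ∈ S) ∧ n = l.sum)
    (x : ℤ) : wordDistZ S 0 (-x) ≤ wordDistZ S 0 x := by
  obtain ⟨l, hlen, hmem, hsum⟩ := exists_list hgen x
  refine le_trans (wd_le (-x) (l.map (fun y => -y)) ?_ ?_) ?_
  · intro y hy
    simp only [List.mem_map] at hy
    obtain ⟨z, hz, rfl⟩ := hy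
    rcases hmem z hz with h | h
    · right; simpa using h
    · left; exact h
  · rw [hsum]
    have hmap : ∀ m : List ℤ, (m.map (fun y => -y)).sum = -m.sum := by
      intro m
      induction m with
      | nil => simp
      | cons a t ih =>
        simp only [List.map_cons, List.sum_cons, ih]
        ring
    rw [hmap]
  · simp only [List.length_map]
    exact hlen.le

lemma wd_neg (hgen : ∀ n : ℤ, ∃ l : List ℤ, (∀ x ∈ l, x ∈ S ∨ -x ∈ S) ∧ n = l.sum)
    (x : ℤ) : wordDistZ S 0 (-x) = wordDistZ S 0 x := by
  refine le_antisymm (wd_neg_le hgen x) ?_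
  have := wd_neg_le hgen (-x)
  simpa using this

lemma wd_add_le (hgen : ∀ n : ℤ, ∃ l : List ℤ, (∀ x ∈ l, x ∈ S ∨ -x ∈ S) ∧ n = l.sum)
    (x y : ℤ) : wordDistZ S 0 (x + y) ≤ wordDistZ S 0 x + wordDistZ S 0 y := by
  obtain ⟨l, hl, hml, hsl⟩ := exists_list hgen x
  obtain ⟨r, hr, hmr, hsr⟩ := exists_list hgen y
  have h := wd_le (x + y) (l ++ r)
    (fun z hz => (List.mem_append.mp hz).elim (hml z) (hmr z))
    (by rw [List.sum_append, ← hsl, ← hsr])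
  simpa [hl, hr] using h

lemma exists_prefix (hgen : ∀ n : ℤ, ∃ l : List ℤ, (∀ x ∈ l, x ∈ S ∨ -x ∈ S) ∧ n = l.sum)
    (N : ℤ) (t : ℕ) (ht : t ≤ wordDistZ S 0 N) :
    ∃ a : ℤ, wordDistZ S 0 a = t ∧ wordDistZ S 0 (N - a) + t = wordDistZ S 0 N := by
  obtain ⟨l, hl, hml, hsl⟩ := exists_list hgen N
  refine ⟨(l.take t).sum, ?_, ?_⟩ <;>
  · have h1 : wordDistZ S 0 (l.take t).sum ≤ t := by
      refine le_trans (wd_le _ (l.take t) (fun z hz => hml z (List.take_subset t l hz)) rfl) ?_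
      simp [List.length_take]
    have hdrop : N - (l.take t).sum = (l.drop t).sum := by
      rw [hsl, ← List.sum_take_add_sum_drop l t]
      ring
    have h2 : wordDistZ S 0 (N - (l.take t).sum) ≤ l.length - t := by
      have := wd_le _ (l.drop t) (fun z hz => hml z (List.drop_subset t l hz)) hdrop
      simpa [List.length_drop] using this
    have h3 : wordDistZ S 0 N ≤ wordDistZ S 0 (l.take t).sum
        + wordDistZ S 0 (N - (l.take t).sum) := by
      have h := wd_add_le hgen (l.take t).sum (N - (l.take t).sum)
      have e : (l.take t).sum + (N - (l.take t).sum) = N := by ring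
      rwa [e] at h
    omega

end Stmt6Aux

/-- for every δ ≥ 0 there is Δ ≥ 1 depending only on δ so that in any
δ-hyperbolic word metric on ℤ, if d_S(0,N) ≥ 10Δ then d_S(0,kN) ≥ |k|·(d_S(0,N) − 4Δ). -/
theorem stmt_6 (δ : ℝ) (hδ : 0 ≤ δ) :
    ∃ Δ : ℝ, 1 ≤ Δ ∧
      ∀ S : Set ℤ,
        -- S ∪ (−S) generates ℤ
        (∀ n : ℤ, ∃ l : List ℤ, (∀ x ∈ l, x ∈ S ∨ -x ∈ S) ∧ n = l.sum) →
        -- (ℤ, d_S) is δ-hyperbolic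
        (∀ x y z w : ℤ, min (gpZ S x z w) (gpZ S y z w) - δ ≤ gpZ S x y w) →
        ∀ N : ℤ, 10 * Δ ≤ (wordDistZ S 0 N : ℝ) →
          ∀ k : ℤ, (|k| : ℝ) * ((wordDistZ S 0 N : ℝ) - 4 * Δ) ≤ (wordDistZ S 0 (k * N) : ℝ) := by
  refine ⟨2*δ + 2, by linarith, ?_⟩
  intro S hgen hhyp N hN k
  have hwd : ∀ x y : ℤ, wordDistZ S x y = wordDistZ S 0 (y - x) := fun x y => by
    simp only [wordDistZ, sub_zero]
  have hsymm : ∀ x : ℤ, wordDistZ S 0 (-x) = wordDistZ S 0 x := Stmt6Aux.wd_neg hgen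
  have key : ∀ x y w : ℤ, gpZ S x y w =
      ((wordDistZ S 0 (w - x) : ℝ) + (wordDistZ S 0 (w - y) : ℝ)
        - (wordDistZ S 0 (y - x) : ℝ)) / 2 := by
    intro x y w
    unfold gpZ
    rw [hwd x w, hwd y w, hwd x y]
  have hM2 : (wordDistZ S 0 (2*N) : ℝ) ≤ (wordDistZ S 0 N : ℝ) + (wordDistZ S 0 N : ℝ) := by
    have h := Stmt6Aux.wd_add_le hgen N N
    rw [show N + N = 2*N from by ring] at h
    exact_mod_cast h
  -- the crush lemma
  have crush : ∀ t : ℕ, t ≤ wordDistZ S 0 N →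
      2*(t:ℝ) ≤ 2*(wordDistZ S 0 N : ℝ) - (wordDistZ S 0 (2*N) : ℝ) →
      ∃ a : ℤ, (wordDistZ S 0 a : ℝ) = t ∧
        (wordDistZ S 0 (N - a) : ℝ) = (wordDistZ S 0 N : ℝ) - t ∧
        (wordDistZ S 0 (N + a) : ℝ) ≤ (wordDistZ S 0 N : ℝ) - t + 2*δ ∧
        (wordDistZ S 0 (2*a) : ℝ) ≤ 4*δ := by
    intro t htn hts
    obtain ⟨a, ha1, ha2⟩ := Stmt6Aux.exists_prefix hgen N t htn
    have hA : (wordDistZ S 0 a : ℝ) = t := by exact_mod_cast ha1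
    have hB : (wordDistZ S 0 (N - a) : ℝ) = (wordDistZ S 0 N : ℝ) - t := by
      have h : (wordDistZ S 0 (N - a) : ℝ) + t = (wordDistZ S 0 N : ℝ) := by exact_mod_cast ha2
      linarith
    have e1 : gpZ S a N 0 =
        ((wordDistZ S 0 a : ℝ) + (wordDistZ S 0 N : ℝ) - (wordDistZ S 0 (N - a) : ℝ)) / 2 := by
      rw [key, show (0:ℤ) - a = -a from by ring, show (0:ℤ) - N = -N from by ring,
        hsymm a, hsymm N]
    have e2 : gpZ S (-N) N 0 =
        ((wordDistZ S 0 N : ℝ) + (wordDistZ S 0 N : ℝ) - (wordDistZ S 0 (2*N) : ℝ)) / 2 := by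
      rw [key, show (0:ℤ) - -N = N from by ring, show (0:ℤ) - N = -N from by ring,
        show N - -N = 2*N from by ring, hsymm N]
    have e3 : gpZ S a (-N) 0 =
        ((wordDistZ S 0 a : ℝ) + (wordDistZ S 0 N : ℝ) - (wordDistZ S 0 (N + a) : ℝ)) / 2 := by
      rw [key, show (0:ℤ) - a = -a from by ring, show (0:ℤ) - -N = N from by ring,
        show -N - a = -(N + a) from by ring, hsymm a, hsymm (N + a)]
    have e4 : gpZ S (-a) (-N) 0 =
        ((wordDistZ S 0 a : ℝ) + (wordDistZ S 0 N : ℝ) - (wordDistZ S 0 (N - a) : ℝ)) / 2 := by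
      rw [key, show (0:ℤ) - -a = a from by ring, show (0:ℤ) - -N = N from by ring,
        show -N - -a = -(N - a) from by ring, hsymm (N - a)]
    have e5 : gpZ S a (-a) 0 =
        ((wordDistZ S 0 a : ℝ) + (wordDistZ S 0 a : ℝ) - (wordDistZ S 0 (2*a) : ℝ)) / 2 := by
      rw [key, show (0:ℤ) - a = -a from by ring, show (0:ℤ) - -a = a from by ring,
        show -a - a = -(2*a) from by ring, hsymm a, hsymm (2*a)]
    have hP : (wordDistZ S 0 (N + a) : ℝ) ≤ (wordDistZ S 0 N : ℝ) - t + 2*δ := by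
      have h1 := hhyp a (-N) N 0
      rcases min_choice (gpZ S a N 0) (gpZ S (-N) N 0) with hm | hm
      · rw [hm, e1, e3] at h1
        linarith
      · rw [hm, e2, e3] at h1
        linarith
    have hQ : (wordDistZ S 0 (2*a) : ℝ) ≤ 4*δ := by
      have h2 := hhyp a (-a) (-N) 0
      rcases min_choice (gpZ S a (-N) 0) (gpZ S (-a) (-N) 0) with hm | hm
      · rw [hm, e3, e5] at h2
        linarith
      · rw [hm, e4, e5] at h2
        linarith
    exact ⟨a, hA, hB, hP, hQ⟩
  -- bound on the Gromov product c = (N, -N)_0 : 2n - M < 4δ + 4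
  have hc : 2*(wordDistZ S 0 N : ℝ) - (wordDistZ S 0 (2*N) : ℝ) < 4*δ + 4 := by
    by_contra hcon
    push_neg at hcon
    set t : ℕ := ⌈2*δ+1⌉₊ with htdef
    have ht1 : 2*δ+1 ≤ (t:ℝ) := Nat.le_ceil _
    have ht2 : (t:ℝ) < 2*δ+2 := by
      have := Nat.ceil_lt_add_one (show (0:ℝ) ≤ 2*δ+1 by linarith)
      rw [← htdef] at this
      linarith
    have htn : t ≤ wordDistZ S 0 N := by
      have hn' : (t:ℝ) ≤ (wordDistZ S 0 N : ℝ) := by linarith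
      exact_mod_cast hn'
    have hts : 2*(t:ℝ) ≤ 2*(wordDistZ S 0 N : ℝ) - (wordDistZ S 0 (2*N) : ℝ) := by linarith
    obtain ⟨a, hA, hB, hP, hQ⟩ := crush t htn hts
    have e1 : gpZ S a N 0 =
        ((wordDistZ S 0 a : ℝ) + (wordDistZ S 0 N : ℝ) - (wordDistZ S 0 (N - a) : ℝ)) / 2 := by
      rw [key, show (0:ℤ) - a = -a from by ring, show (0:ℤ) - N = -N from by ring,
        hsymm a, hsymm N]
    have e6 : gpZ S (N + a) N 0 =
        ((wordDistZ S 0 (N + a) : ℝ) + (wordDistZ S 0 N : ℝ) - (wordDistZ S 0 a : ℝ)) / 2 := by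
      rw [key, show (0:ℤ) - (N + a) = -(N + a) from by ring, show (0:ℤ) - N = -N from by ring,
        show N - (N + a) = -a from by ring, hsymm (N + a), hsymm N, hsymm a]
    have e7 : gpZ S a (N + a) 0 =
        ((wordDistZ S 0 a : ℝ) + (wordDistZ S 0 (N + a) : ℝ) - (wordDistZ S 0 N : ℝ)) / 2 := by
      rw [key, show (0:ℤ) - a = -a from by ring, show (0:ℤ) - (N + a) = -(N + a) from by ring,
        show N + a - a = N from by ring, hsymm a, hsymm (N + a)]
    have h3 := hhyp a (N + a) N 0
    rcases min_choice (gpZ S a N 0) (gpZ S (N + a) N 0) with hm | hm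
    · rw [hm, e1, e7] at h3
      linarith
    · rw [hm, e6, e7] at h3
      linarith
  -- chain step
  have hstep : ∀ K : ℤ,
      (wordDistZ S 0 ((K-1)*N) : ℝ) +
        ((wordDistZ S 0 (2*N) : ℝ) - (wordDistZ S 0 N : ℝ) - 2*δ) ≤ (wordDistZ S 0 (K*N) : ℝ) →
      (wordDistZ S 0 (K*N) : ℝ) +
        ((wordDistZ S 0 (2*N) : ℝ) - (wordDistZ S 0 N : ℝ) - 2*δ)
          ≤ (wordDistZ S 0 ((K+1)*N) : ℝ) := by
    intro K hK
    have e8 : gpZ S ((K-1)*N) 0 (K*N) =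
        ((wordDistZ S 0 N : ℝ) + (wordDistZ S 0 (K*N) : ℝ)
          - (wordDistZ S 0 ((K-1)*N) : ℝ)) / 2 := by
      rw [key, show K*N - (K-1)*N = N from by ring, show K*N - 0 = K*N from by ring,
        show (0:ℤ) - (K-1)*N = -((K-1)*N) from by ring, hsymm ((K-1)*N)]
    have e9 : gpZ S ((K+1)*N) 0 (K*N) =
        ((wordDistZ S 0 N : ℝ) + (wordDistZ S 0 (K*N) : ℝ)
          - (wordDistZ S 0 ((K+1)*N) : ℝ)) / 2 := by
      rw [key, show K*N - (K+1)*N = -N from by ring, show K*N - 0 = K*N from by ring,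
        show (0:ℤ) - (K+1)*N = -((K+1)*N) from by ring, hsymm N, hsymm ((K+1)*N)]
    have e10 : gpZ S ((K-1)*N) ((K+1)*N) (K*N) =
        ((wordDistZ S 0 N : ℝ) + (wordDistZ S 0 N : ℝ) - (wordDistZ S 0 (2*N) : ℝ)) / 2 := by
      rw [key, show K*N - (K-1)*N = N from by ring, show K*N - (K+1)*N = -N from by ring,
        show (K+1)*N - (K-1)*N = 2*N from by ring, hsymm N]
    have h := hhyp ((K-1)*N) ((K+1)*N) 0 (K*N)
    rcases min_choice (gpZ S ((K-1)*N) 0 (K*N)) (gpZ S ((K+1)*N) 0 (K*N)) with hm | hm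
    · rw [hm, e8, e10] at h
      linarith
    · rw [hm, e9, e10] at h
      linarith
  -- cumulative induction
  have hcum : ∀ j : ℕ,
      (j:ℝ) * ((wordDistZ S 0 (2*N) : ℝ) - (wordDistZ S 0 N : ℝ) - 2*δ)
        ≤ (wordDistZ S 0 ((j:ℤ)*N) : ℝ) ∧
      (wordDistZ S 0 ((j:ℤ)*N) : ℝ) +
        ((wordDistZ S 0 (2*N) : ℝ) - (wordDistZ S 0 N : ℝ) - 2*δ)
          ≤ (wordDistZ S 0 (((j:ℤ)+1)*N) : ℝ) := by
    intro j
    induction j with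
    | zero =>
      constructor
      · have e0 : ((0:ℕ):ℤ) * N = 0 := by push_cast; ring
        rw [e0, Stmt6Aux.wd_zero]
        push_cast
        linarith
      · have e0 : ((0:ℕ):ℤ) * N = 0 := by push_cast; ring
        have e1 : (((0:ℕ):ℤ)+1) * N = N := by push_cast; ring
        rw [e0, e1, Stmt6Aux.wd_zero]
        push_cast
        linarith
    | succ j ih =>
      have hs := hstep ((j:ℤ)+1) (by
        rw [show ((j:ℤ)+1) - 1 = (j:ℤ) from by ring]
        exact ih.2)
      have e : ((j+1:ℕ):ℤ) = (j:ℤ)+1 := by push_cast; ring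
      constructor
      · rw [e]
        push_cast
        nlinarith [ih.1, ih.2]
      · rw [e]
        exact hs
  have hfin : ∀ j : ℕ,
      (j:ℝ) * ((wordDistZ S 0 N : ℝ) - 4 * (2*δ + 2)) ≤ (wordDistZ S 0 ((j:ℤ)*N) : ℝ) := by
    intro j
    have h1 := (hcum j).1
    have h2 : (wordDistZ S 0 N : ℝ) - 4 * (2*δ + 2)
        ≤ (wordDistZ S 0 (2*N) : ℝ) - (wordDistZ S 0 N : ℝ) - 2*δ := by linarith
    calc (j:ℝ) * ((wordDistZ S 0 N : ℝ) - 4 * (2*δ + 2))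
        ≤ (j:ℝ) * ((wordDistZ S 0 (2*N) : ℝ) - (wordDistZ S 0 N : ℝ) - 2*δ) :=
          mul_le_mul_of_nonneg_left h2 (Nat.cast_nonneg j)
      _ ≤ _ := h1
  have habs : (|k| : ℝ) = (k.natAbs : ℝ) := by
    rw [Nat.cast_natAbs, Int.cast_abs]
  rcases Int.natAbs_eq k with hk | hk
  · have h := hfin k.natAbs
    rw [show ((k.natAbs : ℤ)) * N = k * N from by rw [← hk]] at h
    rw [habs]
    exact h
  · have h := hfin k.natAbs
    have e : ((k.natAbs : ℤ)) * N = -(k * N) := by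
      conv_rhs => rw [hk]
      ring
    rw [e, hsymm (k*N)] at h
    rw [habs]
    exact h
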